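/- arXiv:1907.06008 — 2 statements merged into one kernel-verified Lean document; each statement's English description precedes it below -/
import Mathlib

section
/- Let n ≥ 4 and 2 ≤ k ≤ n−2 be integers. Then F_k(P_n) has exactly two vertices of degree 1, namely {1, 2, …, k} and {n−k+1, n−k+2, …, n}. -/
open scoped symmDiff

/-- The `k`-token graph of a simple graph `G`. -/
def tokenGraph {V : Type*} [DecidableEq V] (G : SimpleGraph V) (k : ℕ) :
    SimpleGraph {s : Finset V // s.card = k} where
  Adj A B := ∃ a b, G.Adj a b ∧ A.val ∆ B.val = {a, b}
  symm := by
    constructor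
    rintro A B ⟨a, b, hab, h⟩
    exact ⟨a, b, hab, by rwa [symmDiff_comm]⟩
  loopless := by
    constructor
    rintro A ⟨a, b, hab, h⟩
    rw [symmDiff_self] at h
    have ha : a ∈ ({a, b} : Finset V) := Finset.mem_insert_self a {b}
    rw [← h] at ha
    simp at ha

section Aux

variable {α : Type*} [DecidableEq α]

lemma symmDiff_pair_eq {S : Finset α} {a b : α} (ha : a ∈ S) (hb : b ∉ S) :
    S ∆ ({a, b} : Finset α) = insert b (S.erase a) := by
  have hab : a ≠ b := fun h => hb (h ▸ ha)
  ext x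
  simp only [Finset.mem_symmDiff, Finset.mem_insert, Finset.mem_singleton, Finset.mem_erase]
  constructor
  · rintro (⟨hxS, hx⟩ | ⟨(rfl | rfl), hxS⟩)
    · exact Or.inr ⟨fun h => hx (Or.inl h), hxS⟩
    · exact absurd ha hxS
    · exact Or.inl rfl
  · rintro (rfl | ⟨hxa, hxS⟩)
    · exact Or.inr ⟨Or.inr rfl, hb⟩
    · exact Or.inl ⟨hxS, by rintro (rfl | rfl); exacts [hxa rfl, hb hxS]⟩

lemma card_symmDiff_pair' {S : Finset α} {a b : α} (ha : a ∈ S) (hb : b ∉ S) :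
    (S ∆ ({a, b} : Finset α)).card = S.card := by
  rw [symmDiff_pair_eq ha hb,
    Finset.card_insert_of_notMem (fun h => hb (Finset.mem_of_mem_erase h)),
    Finset.card_erase_of_mem ha]
  have : 1 ≤ S.card := Finset.card_pos.mpr ⟨a, ha⟩
  omega

lemma card_symmDiff_pair {S : Finset α} {a b : α} (h : a ∈ S ↔ b ∉ S) :
    (S ∆ ({a, b} : Finset α)).card = S.card := by
  by_cases ha : a ∈ S
  · exact card_symmDiff_pair' ha (h.mp ha)
  · have hb : b ∈ S := by by_contra hb; exact ha (h.mpr hb)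
    rw [Finset.pair_comm]
    exact card_symmDiff_pair' hb ha

lemma not_both_mem {S T : Finset α} (hcard : T.card = S.card) {a b : α} (hab : a ≠ b)
    (hd : S ∆ T = {a, b}) (ha : a ∈ S) (hb : b ∈ S) : False := by
  have haST : a ∈ S ∆ T := by rw [hd]; simp
  have hbST : b ∈ S ∆ T := by rw [hd]; simp
  rw [Finset.mem_symmDiff] at haST hbST
  have ha' : a ∉ T := by tauto
  have hb' : b ∉ T := by tauto
  have hsub : ({a, b} : Finset α) ⊆ S := by
    intro x hx
    simp only [Finset.mem_insert, Finset.mem_singleton] at hx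
    rcases hx with rfl | rfl <;> assumption
  have hTeq : T = S \ {a, b} := by
    ext x
    by_cases hxa : x = a
    · subst hxa; simp [ha']
    by_cases hxb : x = b
    · subst hxb; simp [hb']
    have hx : x ∉ S ∆ T := by rw [hd]; simp [hxa, hxb]
    rw [Finset.mem_symmDiff] at hx
    simp only [Finset.mem_sdiff, Finset.mem_insert, Finset.mem_singleton]
    constructor
    · intro hxT; exact ⟨by tauto, by tauto⟩
    · rintro ⟨hxS, -⟩; by_contra hxT; exact hx (Or.inl ⟨hxS, hxT⟩)
  have h2 : T.card = S.card - 2 := by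
    rw [hTeq, Finset.card_sdiff_of_subset hsub, Finset.card_pair hab]
  have : 1 ≤ S.card := Finset.card_pos.mpr ⟨a, ha⟩
  have : 2 ≤ S.card := by
    have := Finset.card_le_card hsub
    rwa [Finset.card_pair hab] at this
  omega

lemma exactly_one_mem {S T : Finset α} (hcard : S.card = T.card) {a b : α} (hab : a ≠ b)
    (hd : S ∆ T = {a, b}) : (a ∈ S ↔ b ∉ S) := by
  have haST : a ∈ S ∆ T := by rw [hd]; simp
  have hbST : b ∈ S ∆ T := by rw [hd]; simp
  rw [Finset.mem_symmDiff] at haST hbST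
  constructor
  · intro ha hb
    exact not_both_mem hcard.symm hab hd ha hb
  · intro hb
    by_contra ha
    have ha' : a ∈ T := by tauto
    have hb' : b ∈ T := by tauto
    exact not_both_mem hcard hab (by rwa [symmDiff_comm]) ha' hb'

end Aux

/-- membership of the `i`-th path vertex in `S`. -/
def mem' {n : ℕ} (S : Finset (Fin n)) (i : ℕ) : Prop :=
  ∃ h : i < n, (⟨i, h⟩ : Fin n) ∈ S

lemma mem'_iff {n : ℕ} {S : Finset (Fin n)} {i : ℕ} (h : i < n) :
    mem' S i ↔ (⟨i, h⟩ : Fin n) ∈ S :=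
  ⟨fun ⟨_, hm⟩ => hm, fun hm => ⟨h, hm⟩⟩

open scoped Classical in
/-- the set of boundary positions of `S`. -/
noncomputable def crossings {n : ℕ} (S : Finset (Fin n)) : Finset ℕ :=
  (Finset.range (n - 1)).filter (fun i => ¬ (mem' S i ↔ mem' S (i + 1)))

lemma mem_crossings {n : ℕ} {S : Finset (Fin n)} {i : ℕ} :
    i ∈ crossings S ↔ i + 1 < n ∧ ¬ (mem' S i ↔ mem' S (i + 1)) := by
  classical
  simp only [crossings, Finset.mem_filter, Finset.mem_range]
  constructor
  · rintro ⟨h1, h2⟩; exact ⟨by omega, h2⟩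
  · rintro ⟨h1, h2⟩; exact ⟨by omega, h2⟩

lemma crossings_bound {n : ℕ} {S : Finset (Fin n)} {i : ℕ} (h : i ∈ crossings S) :
    i + 1 < n := (mem_crossings.mp h).1

/-- flip the tokens at positions `i`, `i+1`. -/
def flipAt {n : ℕ} (S : Finset (Fin n)) (i : ℕ) (h : i + 1 < n) : Finset (Fin n) :=
  S ∆ {⟨i, by omega⟩, ⟨i + 1, h⟩}

lemma flip_card {n : ℕ} {S : Finset (Fin n)} {i : ℕ} (hi : i ∈ crossings S) :
    (flipAt S i (crossings_bound hi)).card = S.card := by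
  have h := (mem_crossings.mp hi).2
  have hn := crossings_bound hi
  apply card_symmDiff_pair
  rw [← mem'_iff (show i < n by omega), ← mem'_iff hn]
  tauto

open scoped Classical in
lemma tokenPath_degree {n k : ℕ} (hk : 2 ≤ k) (v : {s : Finset (Fin n) // s.card = k}) :
    (tokenGraph (SimpleGraph.pathGraph n) k).degree v = (crossings v.val).card := by
  rw [← SimpleGraph.card_neighborFinset_eq_degree]
  refine (Finset.card_bij
    (fun i hi => (⟨flipAt v.val i (crossings_bound hi),
      (flip_card hi).trans v.prop⟩ : {s : Finset (Fin n) // s.card = k}))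
    ?_ ?_ ?_).symm
  · intro i hi
    rw [SimpleGraph.mem_neighborFinset]
    have hn := crossings_bound hi
    refine ⟨⟨i, by omega⟩, ⟨i + 1, hn⟩, ?_, ?_⟩
    · exact SimpleGraph.pathGraph_adj.mpr (Or.inl rfl)
    · show v.val ∆ (v.val ∆ _) = _
      rw [symmDiff_symmDiff_cancel_left]
  · intro i hi j hj h
    have h' : flipAt v.val i (crossings_bound hi) = flipAt v.val j (crossings_bound hj) :=
      congrArg Subtype.val h
    unfold flipAt at h'
    have hpair := symmDiff_right_injective _ h'
    have h1 : (⟨i, by have := crossings_bound hi; omega⟩ : Fin n) ∈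
        ({⟨j, by have := crossings_bound hj; omega⟩, ⟨j + 1, crossings_bound hj⟩} : Finset (Fin n)) := by
      rw [← hpair]; simp
    have h2 : (⟨j, by have := crossings_bound hj; omega⟩ : Fin n) ∈
        ({⟨i, by have := crossings_bound hi; omega⟩, ⟨i + 1, crossings_bound hi⟩} : Finset (Fin n)) := by
      rw [hpair]; simp
    simp only [Finset.mem_insert, Finset.mem_singleton, Fin.mk.injEq] at h1 h2
    omega
  · intro T hT
    rw [SimpleGraph.mem_neighborFinset] at hT
    obtain ⟨a, b, hab, hd⟩ := hT
    rw [SimpleGraph.pathGraph_adj] at hab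
    -- wlog a.val + 1 = b.val
    have key : ∀ a b : Fin n, (a : ℕ) + 1 = (b : ℕ) → v.val ∆ T.val = {a, b} →
        ∃ i, ∃ hi : i ∈ crossings v.val,
          (⟨flipAt v.val i (crossings_bound hi), (flip_card hi).trans v.prop⟩ :
            {s : Finset (Fin n) // s.card = k}) = T := by
      clear hab hd a b
      intro a b hab hd
      have habne : a ≠ b := by
        intro h; rw [h] at hab; omega
      have hone : (a ∈ v.val ↔ b ∉ v.val) :=
        exactly_one_mem (v.prop.trans T.prop.symm) habne hd
      have hblt : (b : ℕ) < n := b.isLt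
      have hi : (a : ℕ) ∈ crossings v.val := by
        rw [mem_crossings]
        constructor
        · omega
        · rw [mem'_iff (show (a:ℕ) < n by omega), mem'_iff (show (a:ℕ) + 1 < n by omega)]
          have e1 : (⟨(a : ℕ), by omega⟩ : Fin n) = a := Fin.eta a a.isLt
          have e2 : (⟨(a : ℕ) + 1, by omega⟩ : Fin n) = b := by
            apply Fin.ext; simpa using hab
          rw [e1, e2]
          tauto
      refine ⟨(a : ℕ), hi, ?_⟩
      apply Subtype.ext
      show flipAt v.val (a : ℕ) _ = T.val
      unfold flipAt
      have e1 : (⟨(a : ℕ), by have := crossings_bound hi; omega⟩ : Fin n) = a := Fin.eta a a.isLt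
      have e2 : (⟨(a : ℕ) + 1, crossings_bound hi⟩ : Fin n) = b := by
        apply Fin.ext; simpa using hab
      rw [e1, e2, ← hd, symmDiff_symmDiff_cancel_left]
    rcases hab with hab | hab
    · exact key a b hab hd
    · exact key b a hab (hd.trans (Finset.pair_comm a b))

lemma card_filter_val_lt {n m : ℕ} (hm : m ≤ n) [DecidablePred fun i : Fin n => (i : ℕ) < m] :
    (Finset.univ.filter fun i : Fin n => (i : ℕ) < m).card = m := by
  refine Eq.trans ?_ (Finset.card_range m)
  apply Finset.card_bij (fun (i : Fin n) _ => (i : ℕ))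
  · intro a ha
    simp only [Finset.mem_filter] at ha
    simp [ha.2]
  · intro a _ b _ h
    exact Fin.ext h
  · intro j hj
    rw [Finset.mem_range] at hj
    exact ⟨⟨j, by omega⟩, by simp [hj], rfl⟩

lemma card_filter_le_val {n m : ℕ} [DecidablePred fun i : Fin n => m ≤ (i : ℕ)] :
    (Finset.univ.filter fun i : Fin n => m ≤ (i : ℕ)).card = n - m := by
  refine Eq.trans ?_ (Finset.card_range (n - m))
  apply Finset.card_bij (fun (i : Fin n) _ => (i : ℕ) - m)
  · intro a ha
    simp only [Finset.mem_filter] at ha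
    have := a.isLt
    simp only [Finset.mem_range]
    omega
  · intro a ha b hb h
    simp only [Finset.mem_filter] at ha hb
    apply Fin.ext
    omega
  · intro j hj
    rw [Finset.mem_range] at hj
    exact ⟨⟨j + m, by omega⟩, by simp, by simp⟩

open scoped Classical in
lemma crossings_card_one {n k : ℕ} (hn : 4 ≤ n) (hk2 : 2 ≤ k) (hkn : k ≤ n - 2)
    {S : Finset (Fin n)} (hS : S.card = k) :
    (crossings S).card = 1 ↔
      (S = Finset.univ.filter (fun i : Fin n => (i : ℕ) < k) ∨
       S = Finset.univ.filter fun i : Fin n => n - k ≤ (i : ℕ)) := by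
  constructor
  · intro h1
    obtain ⟨j, hj⟩ := Finset.card_eq_one.mp h1
    have hjB : j ∈ crossings S := hj ▸ Finset.mem_singleton_self j
    have hjlt : j + 1 < n := crossings_bound hjB
    have hcrossj : ¬ (mem' S j ↔ mem' S (j + 1)) := (mem_crossings.mp hjB).2
    have hflat : ∀ i, i + 1 < n → i ≠ j → (mem' S i ↔ mem' S (i + 1)) := by
      intro i h hne
      by_contra hc
      have hmem : i ∈ crossings S := mem_crossings.mpr ⟨h, hc⟩
      rw [hj, Finset.mem_singleton] at hmem
      exact hne hmem
    have left : ∀ i ≤ j, (mem' S i ↔ mem' S j) := by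
      intro i hi
      obtain ⟨d, hd⟩ : ∃ d, i + d = j := ⟨j - i, by omega⟩
      clear hi
      induction d generalizing i with
      | zero =>
        obtain rfl : i = j := by omega
        exact Iff.rfl
      | succ d ih =>
        have h1 : mem' S i ↔ mem' S (i + 1) := hflat i (by omega) (by omega)
        exact h1.trans (ih (i + 1) (by omega))
    have right : ∀ i, j + 1 ≤ i → i < n → (mem' S i ↔ mem' S (j + 1)) := by
      have right' : ∀ d, j + 1 + d < n → (mem' S (j + 1 + d) ↔ mem' S (j + 1)) := by
        intro d
        induction d with
        | zero => intro _; rfl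
        | succ d ih =>
          intro h
          have h1 : mem' S (j + 1 + d) ↔ mem' S (j + 1 + d + 1) := hflat _ (by omega) (by omega)
          have e : j + 1 + (d + 1) = j + 1 + d + 1 := by omega
          rw [e]
          exact h1.symm.trans (ih (by omega))
      intro i hi1 hi2
      have e : i = j + 1 + (i - (j + 1)) := by omega
      rw [e]
      exact right' _ (by omega)
    by_cases hmj : mem' S j
    · have hmj1 : ¬ mem' S (j + 1) := by tauto
      have hSeq : S = Finset.univ.filter (fun i : Fin n => (i : ℕ) < j + 1) := by
        ext x
        simp only [Finset.mem_filter, Finset.mem_univ, true_and]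
        constructor
        · intro hx
          by_contra hxle
          have hm : mem' S (x : ℕ) := ⟨x.isLt, by rwa [Fin.eta]⟩
          exact hmj1 ((right (x : ℕ) (by omega) x.isLt).mp hm)
        · intro hx
          have hm : mem' S (x : ℕ) := (left (x : ℕ) (by omega)).mpr hmj
          obtain ⟨h', hmem⟩ := hm
          rwa [Fin.eta] at hmem
      have hcard : j + 1 = k := by
        rw [hSeq, card_filter_val_lt (by omega)] at hS
        exact hS
      left
      rw [hSeq, ← hcard]
    · have hmj1 : mem' S (j + 1) := by tauto
      have hSeq : S = Finset.univ.filter (fun i : Fin n => j + 1 ≤ (i : ℕ)) := by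
        ext x
        simp only [Finset.mem_filter, Finset.mem_univ, true_and]
        constructor
        · intro hx
          by_contra hxle
          have hm : mem' S (x : ℕ) := ⟨x.isLt, by rwa [Fin.eta]⟩
          exact hmj ((left (x : ℕ) (by omega)).mp hm)
        · intro hx
          have hm : mem' S (x : ℕ) := (right (x : ℕ) hx x.isLt).mpr hmj1
          obtain ⟨h', hmem⟩ := hm
          rwa [Fin.eta] at hmem
      have hcard : n - (j + 1) = k := by
        rw [hSeq, card_filter_le_val] at hS
        exact hS
      right
      rw [hSeq]
      have e : n - k = j + 1 := by omega
      rw [e]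
  · intro h
    rcases h with h | h
    · have hm : ∀ i, mem' S i ↔ (i < n ∧ i < k) := by
        intro i
        constructor
        · rintro ⟨h', hmem⟩
          rw [h] at hmem
          simp only [Finset.mem_filter, Finset.mem_univ, true_and] at hmem
          exact ⟨h', hmem⟩
        · rintro ⟨h1, h2⟩
          exact ⟨h1, by rw [h]; simp; omega⟩
      have : crossings S = {k - 1} := by
        ext i
        rw [mem_crossings, Finset.mem_singleton, hm i, hm (i + 1)]
        omega
      rw [this]
      simp
    · have hm : ∀ i, mem' S i ↔ (i < n ∧ n - k ≤ i) := by
        intro i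
        constructor
        · rintro ⟨h', hmem⟩
          rw [h] at hmem
          simp only [Finset.mem_filter, Finset.mem_univ, true_and] at hmem
          exact ⟨h', hmem⟩
        · rintro ⟨h1, h2⟩
          exact ⟨h1, by rw [h]; simp; omega⟩
      have : crossings S = {n - k - 1} := by
        ext i
        rw [mem_crossings, Finset.mem_singleton, hm i, hm (i + 1)]
        omega
      rw [this]
      simp

open SimpleGraph in
open scoped Classical in
/-- For `n ≥ 4` and `2 ≤ k ≤ n - 2`, the graph `F_k(P_n)` has exactly two vertices of
degree one, namely the first `k` vertices `{1, …, k}` and the last `k` vertices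
`{n-k+1, …, n}` of the path. -/
theorem stmt_18 (n k : ℕ) (hn : 4 ≤ n) (hk2 : 2 ≤ k) (hkn : k ≤ n - 2) :
    (Finset.univ.filter fun i : Fin n => (i : ℕ) < k) ≠
      (Finset.univ.filter fun i : Fin n => n - k ≤ (i : ℕ)) ∧
    ∀ v : {s : Finset (Fin n) // s.card = k},
      ((tokenGraph (pathGraph n) k).degree v = 1 ↔
        (v.val = Finset.univ.filter (fun i : Fin n => (i : ℕ) < k) ∨
         v.val = Finset.univ.filter fun i : Fin n => n - k ≤ (i : ℕ))) := by
  constructor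
  · intro h
    have h0 : (⟨0, by omega⟩ : Fin n) ∈ Finset.univ.filter (fun i : Fin n => (i : ℕ) < k) := by
      simp only [Finset.mem_filter, Finset.mem_univ, true_and]
      show 0 < k
      omega
    rw [h] at h0
    simp only [Finset.mem_filter, Finset.mem_univ, true_and] at h0
    have : n - k ≤ 0 := h0
    omega
  · intro v
    rw [tokenPath_degree hk2 v]
    exact crossings_card_one hn hk2 hkn v.prop
end

section
/- Let n ≥ 4 and 2 ≤ k ≤ n−2 be integers, and let v = {a_1, …, a_k} be a vertex of F_k(P_n) with a_1 < a_2 < … < a_k. Then the degree of v in F_k(P_n) is even if and only if either {a_1, a_k} = {1, n} or {a_1, a_k} ∩ {1, n} = ∅. -/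
open scoped symmDiff

/-- symmetric difference with a pair having exactly one element inside keeps the card. -/
lemma aux_card_symmDiff {α : Type*} [DecidableEq α] (S : Finset α) {x y : α} (hxy : x ≠ y)
    (hx : x ∈ S) (hy : y ∉ S) : (S ∆ ({x, y} : Finset α)).card = S.card := by
  have hss : S ∆ ({x, y} : Finset α) = insert y (S.erase x) := by
    ext z
    simp only [Finset.mem_symmDiff, Finset.mem_insert, Finset.mem_singleton, Finset.mem_erase]
    by_cases hz : z = x <;> by_cases hz' : z = y <;> simp_all
  rw [hss, Finset.card_insert_of_notMem (by simp [hy]), Finset.card_erase_of_mem hx]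
  have : 0 < S.card := Finset.card_pos.2 ⟨x, hx⟩
  omega

/-- if `S ∆ B` is a pair and `S`, `B` have equal cards, exactly one element of
the pair lies in `S`. -/
lemma aux_exactly_one {α : Type*} [DecidableEq α] {S B : Finset α} (h : S.card = B.card)
    {x y : α} (hxy : x ≠ y) (hsd : S ∆ B = {x, y}) :
    (x ∈ S ∧ y ∉ S) ∨ (y ∈ S ∧ x ∉ S) := by
  have hcc : (S \ B).card = (B \ S).card := Finset.card_sdiff_comm h
  have hx' : x ∈ S ∆ B := by rw [hsd]; simp
  have hy' : y ∈ S ∆ B := by rw [hsd]; simp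
  rw [Finset.mem_symmDiff] at hx' hy'
  have hcard2 : (S ∆ B).card = 2 := by rw [hsd]; rw [Finset.card_insert_of_notMem (by simp [hxy]), Finset.card_singleton]
  have hunion : (S ∆ B).card = (S \ B).card + (B \ S).card := by
    rw [symmDiff_def, Finset.sup_eq_union]
    exact Finset.card_union_of_disjoint (disjoint_sdiff_sdiff)
  have h1 : (S \ B).card = 1 := by omega
  -- now case analysis
  rcases hx' with ⟨hxS, hxB⟩ | ⟨hxB, hxS⟩
  · rcases hy' with ⟨hyS, hyB⟩ | ⟨hyB, hyS⟩
    · exfalso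
      have : ({x, y} : Finset α) ⊆ S \ B := by
        intro z hz
        simp only [Finset.mem_insert, Finset.mem_singleton] at hz
        rcases hz with rfl | rfl <;> simp [Finset.mem_sdiff, *]
      have := Finset.card_le_card this
      rw [Finset.card_insert_of_notMem (by simp [hxy]), Finset.card_singleton] at this
      omega
    · exact Or.inl ⟨hxS, hyS⟩
  · rcases hy' with ⟨hyS, hyB⟩ | ⟨hyB, hyS⟩
    · exact Or.inr ⟨hyS, hxS⟩
    · exfalso
      have : ({x, y} : Finset α) ⊆ B \ S := by
        intro z hz
        simp only [Finset.mem_insert, Finset.mem_singleton] at hz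
        rcases hz with rfl | rfl <;> simp [Finset.mem_sdiff, *]
      have := Finset.card_le_card this
      rw [Finset.card_insert_of_notMem (by simp [hxy]), Finset.card_singleton] at this
      omega

open Fin.NatCast

open SimpleGraph in
open scoped Classical in
/-- For `n ≥ 4`, `2 ≤ k ≤ n - 2` and a vertex `v = {a_1 < … < a_k}` of `F_k(P_n)`, the
degree of `v` is even iff `{a_1, a_k}` is the set of the two endpoints of the path or
`{a_1, a_k}` is disjoint from it (endpoints of the path being `0` and `n - 1` in `Fin n`,
compared here via their values in `ℕ`). -/
theorem stmt_19 (n k : ℕ) (hn : 4 ≤ n) (hk2 : 2 ≤ k) (hkn : k ≤ n - 2)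
    (v : {s : Finset (Fin n) // s.card = k}) (hne : v.val.Nonempty) :
    Even ((tokenGraph (pathGraph n) k).degree v) ↔
      (({(v.val.min' hne : ℕ), (v.val.max' hne : ℕ)} : Finset ℕ) = {0, n - 1} ∨
       ({(v.val.min' hne : ℕ), (v.val.max' hne : ℕ)} : Finset ℕ) ∩ {0, n - 1} = ∅) := by
  haveI : NeZero n := ⟨by omega⟩
  set S := v.val with hSdef
  have hcard : S.card = k := v.2
  set T : Finset ℕ := (Finset.range (n-1)).filter
      (fun j => ¬(((j : Fin n) ∈ S) ↔ (((j+1 : ℕ) : Fin n) ∈ S))) with hTdef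
  -- Step A : degree = T.card
  have hdeg : (tokenGraph (pathGraph n) k).degree v = T.card := by
    rw [← SimpleGraph.card_neighborFinset_eq_degree]
    symm
    apply Finset.card_bij
      (fun (j : ℕ) (hj : j ∈ T) => (⟨S ∆ ({(j : Fin n), ((j+1 : ℕ) : Fin n)} : Finset (Fin n)), by
        have hj' := hj
        rw [hTdef, Finset.mem_filter, Finset.mem_range] at hj'
        obtain ⟨hjr, hjc⟩ := hj'
        have hv1 : ((j : Fin n) : ℕ) = j := Fin.val_cast_of_lt (by omega)
        have hv2 : (((j+1 : ℕ) : Fin n) : ℕ) = j + 1 := Fin.val_cast_of_lt (by omega)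
        have hxy : (j : Fin n) ≠ ((j+1 : ℕ) : Fin n) := by
          intro h; rw [Fin.ext_iff, hv1, hv2] at h; omega
        by_cases h1 : (j : Fin n) ∈ S
        · have h2 : ((j+1 : ℕ) : Fin n) ∉ S := by tauto
          rw [aux_card_symmDiff S hxy h1 h2]; exact hcard
        · have h2 : ((j+1 : ℕ) : Fin n) ∈ S := by tauto
          rw [Finset.pair_comm, aux_card_symmDiff S (Ne.symm hxy) h2 h1]; exact hcard⟩ :
        {s : Finset (Fin n) // s.card = k}))
    · -- maps into neighborFinset
      intro j hj
      rw [hTdef, Finset.mem_filter, Finset.mem_range] at hj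
      obtain ⟨hjr, hjc⟩ := hj
      rw [SimpleGraph.mem_neighborFinset]
      refine ⟨(j : Fin n), ((j+1 : ℕ) : Fin n), ?_, ?_⟩
      · rw [SimpleGraph.pathGraph_adj]
        left
        rw [Fin.val_cast_of_lt (by omega), Fin.val_cast_of_lt (by omega)]
      · exact symmDiff_symmDiff_cancel_left _ _
    · -- injectivity
      intro j hj j' hj' heq
      rw [hTdef, Finset.mem_filter, Finset.mem_range] at hj hj'
      have heq' : S ∆ ({(j : Fin n), ((j+1 : ℕ) : Fin n)} : Finset (Fin n)) =
          S ∆ ({(j' : Fin n), ((j'+1 : ℕ) : Fin n)} : Finset (Fin n)) :=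
        congrArg Subtype.val heq
      have hpair := symmDiff_right_injective S heq'
      have h1 : (j : Fin n) ∈ ({(j' : Fin n), ((j'+1 : ℕ) : Fin n)} : Finset (Fin n)) := by
        rw [← hpair]; simp
      simp only [Finset.mem_insert, Finset.mem_singleton] at h1
      have h2 : ((j+1 : ℕ) : Fin n) ∈ ({(j' : Fin n), ((j'+1 : ℕ) : Fin n)} : Finset (Fin n)) := by
        rw [← hpair]; simp
      simp only [Finset.mem_insert, Finset.mem_singleton] at h2
      have e1 : ((j : Fin n) : ℕ) = j := Fin.val_cast_of_lt (by omega)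
      have e2 : (((j+1 : ℕ) : Fin n) : ℕ) = j+1 := Fin.val_cast_of_lt (by omega)
      have e3 : ((j' : Fin n) : ℕ) = j' := Fin.val_cast_of_lt (by omega)
      have e4 : (((j'+1 : ℕ) : Fin n) : ℕ) = j'+1 := Fin.val_cast_of_lt (by omega)
      rcases h1 with h1 | h1 <;> rcases h2 with h2 | h2 <;>
        rw [Fin.ext_iff] at h1 h2 <;> omega
    · -- surjectivity
      intro B hB
      rw [SimpleGraph.mem_neighborFinset] at hB
      obtain ⟨x, y, hadj, hsd⟩ := hB
      rw [SimpleGraph.pathGraph_adj] at hadj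
      -- normalize so that x.val + 1 = y.val
      obtain ⟨x, y, hxy, hsd⟩ : ∃ x y : Fin n, (x : ℕ) + 1 = (y : ℕ) ∧
          S ∆ B.val = {x, y} := by
        rcases hadj with h | h
        · exact ⟨x, y, h, hsd⟩
        · exact ⟨y, x, h, by rwa [Finset.pair_comm] at hsd⟩
      have hxny : x ≠ y := by intro h; rw [h] at hxy; omega
      refine ⟨(x : ℕ), ?_, ?_⟩
      · rw [hTdef, Finset.mem_filter, Finset.mem_range]
        have hy : (y : ℕ) < n := y.isLt
        have hc1 : (((x : ℕ) : Fin n)) = x := Fin.cast_val_eq_self x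
        have hc2 : ((((x : ℕ) + 1 : ℕ)) : Fin n) = y := by
          rw [hxy]; exact Fin.cast_val_eq_self y
        constructor
        · omega
        · rw [hc1, hc2]
          have := aux_exactly_one (by rw [hcard, B.2]) hxny hsd
          tauto
      · apply Subtype.ext
        have hc1 : (((x : ℕ) : Fin n)) = x := Fin.cast_val_eq_self x
        have hc2 : ((((x : ℕ) + 1 : ℕ)) : Fin n) = y := by
          rw [hxy]; exact Fin.cast_val_eq_self y
        show S ∆ _ = B.val
        rw [hc1, hc2, ← hsd, symmDiff_symmDiff_cancel_left]
  -- Step B : parity of T.card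
  set χ : ℕ → ZMod 2 := fun j => if ((j : Fin n) ∈ S) then 1 else 0 with hχdef
  have hTpar : (T.card : ZMod 2) = χ 0 + χ (n-1) := by
    have hstep : (T.card : ZMod 2) = ∑ j ∈ Finset.range (n-1), (χ j + χ (j+1)) := by
      rw [hTdef, Finset.card_filter, Nat.cast_sum]
      apply Finset.sum_congr rfl
      intro j _
      by_cases h1 : (j : Fin n) ∈ S <;> by_cases h2 : ((j+1 : ℕ) : Fin n) ∈ S <;>
        simp only [hχdef, h1, h2, iff_true, iff_false, true_iff, false_iff, not_true,
          not_false_iff, not_not, if_true, if_false, ite_true, ite_false] <;> decide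
    rw [hstep, Finset.sum_add_distrib]
    have e1 : (∑ j ∈ Finset.range (n-1), χ (j+1)) + χ 0 =
        (∑ j ∈ Finset.range (n-1), χ j) + χ (n-1) := by
      rw [← Finset.sum_range_succ' χ (n-1), ← Finset.sum_range_succ χ (n-1)]
    have htwo : (2 : ZMod 2) = 0 := by decide
    linear_combination e1 + ((∑ j ∈ Finset.range (n-1), χ j) - χ 0) * htwo
  -- Step C : combine
  have heven : Even ((tokenGraph (pathGraph n) k).degree v) ↔
      (((0 : ℕ) : Fin n) ∈ S ↔ (((n-1 : ℕ)) : Fin n) ∈ S) := by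
    rw [hdeg, Nat.even_iff, ← Nat.dvd_iff_mod_eq_zero,
      ← ZMod.natCast_eq_zero_iff, hTpar]
    by_cases h1 : ((0 : ℕ) : Fin n) ∈ S <;> by_cases h2 : (((n-1 : ℕ)) : Fin n) ∈ S <;>
      simp only [hχdef, h1, h2, iff_true, iff_false, true_iff, false_iff, not_true,
        not_false_iff, not_not, if_true, if_false, ite_true, ite_false, iff_self] <;> decide
  rw [heven]
  -- relate endpoint membership with min'/max'
  set a := S.min' hne with ha
  set b := S.max' hne with hb
  have hab : a < b := S.min'_lt_max'_of_card (by omega)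
  have habv : (a : ℕ) < (b : ℕ) := hab
  have hbv : (b : ℕ) < n := b.isLt
  have h0 : (((0 : ℕ) : Fin n) ∈ S) ↔ (a : ℕ) = 0 := by
    constructor
    · intro h
      have := S.min'_le _ h
      have h0v : (((0 : ℕ) : Fin n) : ℕ) = 0 := Fin.val_cast_of_lt (by omega)
      have : (a : ℕ) ≤ (((0 : ℕ) : Fin n) : ℕ) := this
      omega
    · intro h
      have hm := S.min'_mem hne
      have : a = ((0 : ℕ) : Fin n) := by
        rw [Fin.ext_iff, h, Fin.val_cast_of_lt (by omega : (0:ℕ) < n)]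
      rwa [← this]
  have h1 : ((((n-1 : ℕ)) : Fin n) ∈ S) ↔ (b : ℕ) = n - 1 := by
    constructor
    · intro h
      have := S.le_max' _ h
      have hnv : ((((n-1 : ℕ)) : Fin n) : ℕ) = n - 1 := Fin.val_cast_of_lt (by omega)
      have : ((((n-1 : ℕ)) : Fin n) : ℕ) ≤ (b : ℕ) := this
      omega
    · intro h
      have hm := S.max'_mem hne
      have : b = (((n-1 : ℕ)) : Fin n) := by
        rw [Fin.ext_iff, h, Fin.val_cast_of_lt (by omega : n - 1 < n)]
      rwa [← this]
  rw [h0, h1]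
  -- now a pure statement about natural numbers
  constructor
  · intro h
    by_cases hA : (a : ℕ) = 0
    · left
      rw [hA, h.mp hA]
    · right
      have hB : (b : ℕ) ≠ n - 1 := fun hb' => hA (h.mpr hb')
      ext x
      simp only [Finset.mem_inter, Finset.mem_insert, Finset.mem_singleton,
        Finset.notMem_empty, iff_false, not_and]
      intro hx
      rcases hx with rfl | rfl <;> omega
  · intro h
    rcases h with h | h
    · have hA : (a : ℕ) ∈ ({0, n-1} : Finset ℕ) := by rw [← h]; simp
      have hB : (b : ℕ) ∈ ({0, n-1} : Finset ℕ) := by rw [← h]; simp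
      simp only [Finset.mem_insert, Finset.mem_singleton] at hA hB
      omega
    · have hA : (a : ℕ) ∉ ({0, n-1} : Finset ℕ) := by
        intro hx
        have : (a : ℕ) ∈ ({(a : ℕ), (b : ℕ)} : Finset ℕ) ∩ {0, n-1} :=
          Finset.mem_inter.mpr ⟨by simp, hx⟩
        rw [h] at this
        simp at this
      have hB : (b : ℕ) ∉ ({0, n-1} : Finset ℕ) := by
        intro hx
        have : (b : ℕ) ∈ ({(a : ℕ), (b : ℕ)} : Finset ℕ) ∩ {0, n-1} :=
          Finset.mem_inter.mpr ⟨by simp, hx⟩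
        rw [h] at this
        simp at this
      simp only [Finset.mem_insert, Finset.mem_singleton] at hA hB
      push_neg at hA hB
      omega
end
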